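/- arXiv:0711.0171 — 2 statements merged into one kernel-verified Lean document; each statement's English description precedes it below -/
import Mathlib

section
/- For every ε > 0 there is a constant C(ε) such that the following holds. Let N ≥ 2 and let D, H, L be real numbers with 1 ≤ D, H, L ≤ N, and let L₁ ≤ 2L. Then Σ_{d₁, d₂ ≤ D} (1/[d₁, d₂]) · #{ (k₁, k₂, l₁, l₂) ∈ ℕ⁴ : 0 < k₁, k₂ ≤ H, L < l₁, l₂ ≤ L₁, k₁l₁ = k₂l₂ } ≤ C(ε) · N^{ε} · H L. -/
open Finset Real

/-! The count does not depend on `d₁, d₂`, so the sum factors. For fixed `l₁, l₂` the map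
`(k₁, k₂) ↦ k₁ l₁` is injective into the multiples of `[l₁, l₂]` up to `H l₁`, so there are at most
`H (l₁, l₂) / l₂ ≤ H (l₁, l₂) / L` pairs. Bounding `(x, y) ≤ ∑_{g ∣ x, g ∣ y} g` turns both
`∑ 1/[d₁, d₂] = ∑ (d₁, d₂)/(d₁ d₂)` and `∑ (l₁, l₂)` into sums over `g` of squared sums over
multiples of `g`, i.e. harmonic sums; this gives `(1 + log D)³` and `L₁² (1 + log L₁)`.
Altogether the sum is `≪ H L (1 + log 2N)⁴`, and `(1 + log x)ᵏ ≪_{k,ε} x^ε`. -/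

lemma sum_Icc_one_div_le_one_add_log (n : ℕ) :
    ∑ i ∈ Icc 1 n, (1 / (i : ℝ)) ≤ 1 + log n := by
  simpa [harmonic_eq_sum_Icc] using harmonic_le_one_add_log n

lemma log_natCast_le_log {n : ℕ} {x : ℝ} (hx : 1 ≤ x) (hn : (n : ℝ) ≤ x) : log n ≤ log x := by
  rcases n.eq_zero_or_pos with rfl | hn₀
  · simpa using log_nonneg hx
  · exact log_le_log (by exact_mod_cast hn₀) hn

lemma one_add_log_pow_le {x : ℝ} (hx : 1 ≤ x) {ε : ℝ} (hε : 0 < ε) {k : ℕ} (hk : k ≠ 0) :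
    (1 + log x) ^ k ≤ (1 + k / ε) ^ k * x ^ ε := by
  set δ := ε / k with hδ_def
  have hδ : 0 < δ := by positivity
  have hxδ : 1 ≤ x ^ δ := one_le_rpow hx hδ.le
  have hlog : 1 + log x ≤ (1 + k / ε) * x ^ δ := by
    have h := log_le_rpow_div (x := x) (by linarith) hδ
    rw [show x ^ δ / δ = k / ε * x ^ δ by rw [hδ_def]; field_simp] at h
    linarith
  calc (1 + log x) ^ k ≤ ((1 + k / ε) * x ^ δ) ^ k :=
        pow_le_pow_left₀ (by linarith [log_nonneg hx]) hlog k
    _ = (1 + k / ε) ^ k * x ^ ε := by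
        rw [mul_pow, ← rpow_natCast (x ^ δ), ← rpow_mul (by linarith), hδ_def,
          div_mul_cancel₀ _ (by exact_mod_cast hk)]

lemma sum_filter_dvd_Icc {M : Type*} [AddCommMonoid M] (f : ℕ → M) {g : ℕ} (hg : 0 < g) (m : ℕ) :
    ∑ x ∈ Icc 1 m with g ∣ x, f x = ∑ e ∈ Icc 1 (m / g), f (g * e) := by
  have hset : {x ∈ Icc 1 m | g ∣ x} = (Icc 1 (m / g)).image (g * ·) := by
    ext x
    simp only [mem_filter, mem_Icc, mem_image, Nat.le_div_iff_mul_le hg]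
    constructor
    · rintro ⟨⟨hx₁, hxm⟩, e, rfl⟩
      exact ⟨e, ⟨Nat.pos_of_mul_pos_left hx₁, by linarith [mul_comm g e]⟩, rfl⟩
    · rintro ⟨e, ⟨he₁, hem⟩, rfl⟩
      exact ⟨⟨Nat.mul_pos hg he₁, by linarith [mul_comm g e]⟩, dvd_mul_right g e⟩
  rw [hset, sum_image fun _ _ _ _ h => Nat.eq_of_mul_eq_mul_left hg h]

lemma sum_gcd_mul_le (m : ℕ) (w : ℕ → ℝ) (hw : ∀ x ∈ Icc 1 m, 0 ≤ w x) :
    ∑ x ∈ Icc 1 m, ∑ y ∈ Icc 1 m, (Nat.gcd x y : ℝ) * (w x * w y) ≤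
      ∑ g ∈ Icc 1 m, (g : ℝ) * (∑ x ∈ Icc 1 m with g ∣ x, w x) ^ 2 := by
  have hexpand : ∀ g : ℕ, (g : ℝ) * (∑ x ∈ Icc 1 m with g ∣ x, w x) ^ 2 =
      ∑ x ∈ Icc 1 m, ∑ y ∈ Icc 1 m, if g ∣ x ∧ g ∣ y then (g : ℝ) * (w x * w y) else 0 := by
    intro g
    rw [sum_filter, sq, sum_mul_sum, mul_sum]
    refine sum_congr rfl fun x _ => ?_
    rw [mul_sum]
    refine sum_congr rfl fun y _ => ?_
    split_ifs <;> simp_all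
  simp_rw [hexpand]
  refine le_of_le_of_eq ?_ ((sum_congr rfl fun _ _ => sum_comm).trans sum_comm)
  refine sum_le_sum fun x hx => sum_le_sum fun y hy => ?_
  rw [← sum_filter]
  have hgcd : Nat.gcd x y ∈ {g ∈ Icc 1 m | g ∣ x ∧ g ∣ y} := by
    simp only [mem_filter, mem_Icc] at hx ⊢
    exact ⟨⟨Nat.gcd_pos_of_pos_left y hx.1, (Nat.gcd_le_left y hx.1).trans hx.2⟩,
      Nat.gcd_dvd_left x y, Nat.gcd_dvd_right x y⟩
  exact single_le_sum (f := fun g : ℕ => (g : ℝ) * (w x * w y))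
    (fun g _ => mul_nonneg g.cast_nonneg (mul_nonneg (hw x hx) (hw y hy))) hgcd

lemma sum_one_div_lcm_le (m : ℕ) :
    ∑ d₁ ∈ Icc 1 m, ∑ d₂ ∈ Icc 1 m, (1 / (Nat.lcm d₁ d₂ : ℝ)) ≤ (1 + log m) ^ 3 := by
  set B := 1 + log m
  have hB : 0 ≤ B := by linarith [log_natCast_nonneg m]
  have hlcm : ∀ d₁ ∈ Icc 1 m, ∀ d₂ ∈ Icc 1 m,
      1 / (Nat.lcm d₁ d₂ : ℝ) = Nat.gcd d₁ d₂ * (1 / d₁ * (1 / d₂)) := by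
    intro d₁ hd₁ d₂ hd₂
    have h₁ : (0 : ℝ) < d₁ := by exact_mod_cast (mem_Icc.1 hd₁).1
    have h₂ : (0 : ℝ) < d₂ := by exact_mod_cast (mem_Icc.1 hd₂).1
    have hl : (0 : ℝ) < Nat.lcm d₁ d₂ := by
      exact_mod_cast Nat.lcm_pos (mem_Icc.1 hd₁).1 (mem_Icc.1 hd₂).1
    have hgl : (Nat.gcd d₁ d₂ : ℝ) * Nat.lcm d₁ d₂ = d₁ * d₂ := by
      exact_mod_cast Nat.gcd_mul_lcm d₁ d₂
    field_simp
    linarith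
  have hmult : ∀ g ∈ Icc 1 m, ∑ x ∈ Icc 1 m with g ∣ x, 1 / (x : ℝ) ≤ 1 / g * B := by
    intro g hg
    have hg₀ : 0 < g := (mem_Icc.1 hg).1
    rw [sum_filter_dvd_Icc _ hg₀]
    simp_rw [Nat.cast_mul, ← one_div_mul_one_div, ← mul_sum]
    gcongr
    refine le_trans ?_ (sum_Icc_one_div_le_one_add_log m)
    exact sum_le_sum_of_subset_of_nonneg (Icc_subset_Icc_right (Nat.div_le_self m g))
      fun _ _ _ => by positivity
  calc ∑ d₁ ∈ Icc 1 m, ∑ d₂ ∈ Icc 1 m, (1 / (Nat.lcm d₁ d₂ : ℝ))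
      = ∑ d₁ ∈ Icc 1 m, ∑ d₂ ∈ Icc 1 m, (Nat.gcd d₁ d₂ : ℝ) * (1 / d₁ * (1 / d₂)) :=
        sum_congr rfl fun d₁ hd₁ => sum_congr rfl fun d₂ hd₂ => hlcm d₁ hd₁ d₂ hd₂
    _ ≤ ∑ g ∈ Icc 1 m, (g : ℝ) * (∑ x ∈ Icc 1 m with g ∣ x, 1 / (x : ℝ)) ^ 2 :=
        sum_gcd_mul_le m _ fun _ _ => by positivity
    _ ≤ ∑ g ∈ Icc 1 m, (g : ℝ) * (1 / g * B) ^ 2 := by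
        gcongr with g hg
        exact hmult g hg
    _ = (∑ g ∈ Icc 1 m, 1 / (g : ℝ)) * B ^ 2 := by
        rw [sum_mul]
        refine sum_congr rfl fun g hg => ?_
        have : (0 : ℝ) < g := by exact_mod_cast (mem_Icc.1 hg).1
        field_simp
    _ ≤ B * B ^ 2 := by gcongr; exact sum_Icc_one_div_le_one_add_log m
    _ = B ^ 3 := by ring

lemma sum_gcd_le (b : ℕ) :
    ∑ x ∈ Icc 1 b, ∑ y ∈ Icc 1 b, (Nat.gcd x y : ℝ) ≤ b ^ 2 * (1 + log b) := by
  have hcount : ∀ g ∈ Icc 1 b, ∑ x ∈ Icc 1 b with g ∣ x, (1 : ℝ) ≤ b / g := by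
    intro g _
    rw [sum_const, nsmul_one, show Icc 1 b = Ioc 0 b from rfl, Nat.Ioc_filter_dvd_card_eq_div]
    exact Nat.cast_div_le
  calc ∑ x ∈ Icc 1 b, ∑ y ∈ Icc 1 b, (Nat.gcd x y : ℝ)
      = ∑ x ∈ Icc 1 b, ∑ y ∈ Icc 1 b, (Nat.gcd x y : ℝ) * (1 * 1) := by simp
    _ ≤ ∑ g ∈ Icc 1 b, (g : ℝ) * (∑ x ∈ Icc 1 b with g ∣ x, (1 : ℝ)) ^ 2 :=
        sum_gcd_mul_le b (fun _ => 1) fun _ _ => zero_le_one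
    _ ≤ ∑ g ∈ Icc 1 b, (g : ℝ) * (b / g) ^ 2 := by
        gcongr with g hg
        exact hcount g hg
    _ = b ^ 2 * ∑ g ∈ Icc 1 b, 1 / (g : ℝ) := by
        rw [mul_sum]
        refine sum_congr rfl fun g hg => ?_
        have : (0 : ℝ) < g := by exact_mod_cast (mem_Icc.1 hg).1
        field_simp
    _ ≤ b ^ 2 * (1 + log b) := by gcongr; exact sum_Icc_one_div_le_one_add_log b

lemma card_mul_eq_mul_le (h : ℕ) {l₁ l₂ : ℕ} (hl₁ : 0 < l₁) (hl₂ : 0 < l₂) :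
    (#{k ∈ Icc 1 h ×ˢ Icc 1 h | k.1 * l₁ = k.2 * l₂} : ℝ) ≤ h * Nat.gcd l₁ l₂ / l₂ := by
  have hinj : #{k ∈ Icc 1 h ×ˢ Icc 1 h | k.1 * l₁ = k.2 * l₂} ≤
      #{n ∈ Icc 1 (h * l₁) | Nat.lcm l₁ l₂ ∣ n} := by
    refine card_le_card_of_injOn (fun k => k.1 * l₁) (fun k hk => ?_) (fun k hk k' hk' heq => ?_)
    · simp only [coe_filter, mem_product, mem_Icc, Set.mem_ofPred_eq] at hk ⊢
      refine ⟨⟨Nat.mul_pos hk.1.1.1 hl₁, Nat.mul_le_mul_right l₁ hk.1.1.2⟩,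
        Nat.lcm_dvd (dvd_mul_left _ _) (hk.2 ▸ dvd_mul_left _ _)⟩
    · simp only [coe_filter, mem_product, mem_Icc, Set.mem_ofPred_eq] at hk hk' heq
      refine Prod.ext (Nat.eq_of_mul_eq_mul_right hl₁ heq) (Nat.eq_of_mul_eq_mul_right hl₂ ?_)
      rw [← hk.2, ← hk'.2, heq]
  have hcard : #{n ∈ Icc 1 (h * l₁) | Nat.lcm l₁ l₂ ∣ n} = h * l₁ / Nat.lcm l₁ l₂ :=
    Nat.Ioc_filter_dvd_card_eq_div _ _
  have hlcm : (0 : ℝ) < Nat.lcm l₁ l₂ := by exact_mod_cast Nat.lcm_pos hl₁ hl₂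
  have hgl : (Nat.gcd l₁ l₂ : ℝ) * Nat.lcm l₁ l₂ = l₁ * l₂ := by
    exact_mod_cast Nat.gcd_mul_lcm l₁ l₂
  calc (#{k ∈ Icc 1 h ×ˢ Icc 1 h | k.1 * l₁ = k.2 * l₂} : ℝ)
      ≤ ((h * l₁ / Nat.lcm l₁ l₂ : ℕ) : ℝ) := by exact_mod_cast hinj.trans hcard.le
    _ ≤ ((h * l₁ : ℕ) : ℝ) / Nat.lcm l₁ l₂ := Nat.cast_div_le
    _ = h * Nat.gcd l₁ l₂ / l₂ := by
        rw [div_eq_div_iff hlcm.ne' (by exact_mod_cast hl₂.ne')]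
        push_cast
        linear_combination -(h : ℝ) * hgl

lemma card_quadruples_le (h a b : ℕ) :
    (#{x ∈ (Icc 1 h ×ˢ Icc 1 h) ×ˢ (Ioc a b ×ˢ Ioc a b) | x.1.1 * x.2.1 = x.1.2 * x.2.2} : ℝ) ≤
      h / (a + 1) * (b ^ 2 * (1 + log b)) := by
  have hsplit : #{x ∈ (Icc 1 h ×ˢ Icc 1 h) ×ˢ (Ioc a b ×ˢ Ioc a b) |
      x.1.1 * x.2.1 = x.1.2 * x.2.2} =
      ∑ l₁ ∈ Ioc a b, ∑ l₂ ∈ Ioc a b, #{k ∈ Icc 1 h ×ˢ Icc 1 h | k.1 * l₁ = k.2 * l₂} := by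
    rw [card_filter, sum_product, sum_comm, sum_product]
    simp_rw [card_filter]
  have hterm : ∀ l₁ ∈ Ioc a b, ∀ l₂ ∈ Ioc a b,
      (#{k ∈ Icc 1 h ×ˢ Icc 1 h | k.1 * l₁ = k.2 * l₂} : ℝ) ≤ h / (a + 1) * Nat.gcd l₁ l₂ := by
    intro l₁ hl₁ l₂ hl₂
    rw [mem_Ioc] at hl₁ hl₂
    calc _ ≤ (h : ℝ) * Nat.gcd l₁ l₂ / l₂ := card_mul_eq_mul_le h (by omega) (by omega)
      _ ≤ (h : ℝ) * Nat.gcd l₁ l₂ / (a + 1) := by gcongr; exact_mod_cast hl₂.1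
      _ = h / (a + 1) * Nat.gcd l₁ l₂ := by ring
  have hsub : Ioc a b ⊆ Icc 1 b := fun l hl => by
    rw [mem_Ioc] at hl; rw [mem_Icc]; omega
  calc _ = ∑ l₁ ∈ Ioc a b, ∑ l₂ ∈ Ioc a b,
        (#{k ∈ Icc 1 h ×ˢ Icc 1 h | k.1 * l₁ = k.2 * l₂} : ℝ) := by exact_mod_cast hsplit
    _ ≤ ∑ l₁ ∈ Ioc a b, ∑ l₂ ∈ Ioc a b, h / (a + 1) * (Nat.gcd l₁ l₂ : ℝ) :=
        sum_le_sum fun l₁ hl₁ => sum_le_sum fun l₂ hl₂ => hterm l₁ hl₁ l₂ hl₂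
    _ = h / (a + 1) * ∑ l₁ ∈ Ioc a b, ∑ l₂ ∈ Ioc a b, (Nat.gcd l₁ l₂ : ℝ) := by simp_rw [mul_sum]
    _ ≤ h / (a + 1) * ∑ l₁ ∈ Icc 1 b, ∑ l₂ ∈ Icc 1 b, (Nat.gcd l₁ l₂ : ℝ) := by
        gcongr
        refine (sum_le_sum fun l₁ _ => sum_le_sum_of_subset_of_nonneg hsub fun _ _ _ => ?_).trans
          (sum_le_sum_of_subset_of_nonneg hsub fun _ _ _ => ?_) <;> positivity
    _ ≤ h / (a + 1) * (b ^ 2 * (1 + log b)) := by gcongr; exact sum_gcd_le b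

lemma card_quadruples_floor_le {H L L₁ M : ℝ} (hH : 0 ≤ H) (hL : 0 < L) (hL₁ : L₁ ≤ 2 * L)
    (hM : 1 ≤ M) (hLM : 2 * L ≤ M) :
    (#{x ∈ (Icc 1 ⌊H⌋₊ ×ˢ Icc 1 ⌊H⌋₊) ×ˢ (Ioc ⌊L⌋₊ ⌊L₁⌋₊ ×ˢ Ioc ⌊L⌋₊ ⌊L₁⌋₊) |
      x.1.1 * x.2.1 = x.1.2 * x.2.2} : ℝ) ≤ 4 * H * L * (1 + log M) := by
  have hb : (⌊L₁⌋₊ : ℝ) ≤ 2 * L :=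
    (Nat.cast_le.2 (Nat.floor_le_floor hL₁)).trans (Nat.floor_le (by linarith))
  have hlog := log_natCast_le_log (n := ⌊L₁⌋₊) hM (by linarith)
  calc _ ≤ (⌊H⌋₊ : ℝ) / (⌊L⌋₊ + 1) * ((⌊L₁⌋₊ : ℝ) ^ 2 * (1 + log ⌊L₁⌋₊)) :=
        card_quadruples_le _ _ _
    _ ≤ H / L * ((2 * L) ^ 2 * (1 + log M)) := by
        gcongr ?_ / ?_ * (?_ ^ 2 * ?_)
        · exact Nat.floor_le hH
        · exact (Nat.lt_floor_add_one L).le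
        · linarith
    _ = 4 * H * L * (1 + log M) := by field_simp; ring

/-- For every `ε > 0` there is `C = C(ε) > 0` such that for `N ≥ 2`, reals
`1 ≤ D, H, L ≤ N` and `L₁ ≤ 2L`:
`∑_{d₁,d₂ ≤ D} (1/[d₁,d₂]) · #{(k₁,k₂,l₁,l₂) : 0 < k₁,k₂ ≤ H, L < l₁,l₂ ≤ L₁,
k₁l₁ = k₂l₂} ≤ C N^ε H L`.
(For a natural number `k` and real `H ≥ 0`, `0 < k ≤ H ↔ k ∈ Icc 1 ⌊H⌋₊`, and
`L < l ≤ L₁ ↔ l ∈ Ioc ⌊L⌋₊ ⌊L₁⌋₊` since `L ≥ 1`.) -/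
theorem stmt_8 : ∀ ε : ℝ, 0 < ε → ∃ C > 0, ∀ N D H L L₁ : ℝ, 2 ≤ N →
    1 ≤ D → D ≤ N → 1 ≤ H → H ≤ N → 1 ≤ L → L ≤ N → L₁ ≤ 2 * L →
    ∑ d₁ ∈ Finset.Icc 1 ⌊D⌋₊, ∑ d₂ ∈ Finset.Icc 1 ⌊D⌋₊,
      (1 / (Nat.lcm d₁ d₂ : ℝ)) *
        ((((Finset.Icc 1 ⌊H⌋₊ ×ˢ Finset.Icc 1 ⌊H⌋₊) ×ˢ
            (Finset.Ioc ⌊L⌋₊ ⌊L₁⌋₊ ×ˢ Finset.Ioc ⌊L⌋₊ ⌊L₁⌋₊)).filter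
          (fun x : (ℕ × ℕ) × ℕ × ℕ => x.1.1 * x.2.1 = x.1.2 * x.2.2)).card : ℝ) ≤
    C * N ^ ε * H * L := by
  intro ε hε
  refine ⟨4 * 2 ^ ε * (1 + 4 / ε) ^ 4, by positivity, ?_⟩
  intro N D H L L₁ hN hD hDN hH hHN hL hLN hL₁
  simp_rw [← sum_mul]
  have h2N : 1 ≤ 2 * N := by linarith
  set ℓ := 1 + log (2 * N)
  have hℓ : 0 ≤ ℓ := by linarith [log_nonneg h2N]
  have hS : ∑ d₁ ∈ Icc 1 ⌊D⌋₊, ∑ d₂ ∈ Icc 1 ⌊D⌋₊, 1 / (Nat.lcm d₁ d₂ : ℝ) ≤ ℓ ^ 3 := by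
    have hlog := log_natCast_le_log (n := ⌊D⌋₊) h2N
      (by linarith [Nat.floor_le (by linarith : 0 ≤ D)])
    exact (sum_one_div_lcm_le _).trans
      (pow_le_pow_left₀ (by linarith [log_natCast_nonneg ⌊D⌋₊]) (by linarith) 3)
  have hc := card_quadruples_floor_le (zero_le_one.trans hH) (zero_lt_one.trans_le hL) hL₁ h2N
    (by linarith)
  have hpow : ℓ ^ 4 ≤ (1 + 4 / ε) ^ 4 * (2 * N) ^ ε := by
    exact_mod_cast one_add_log_pow_le h2N hε four_ne_zero
  calc _ ≤ ℓ ^ 3 * (4 * H * L * ℓ) := mul_le_mul hS hc (by positivity) (by positivity)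
    _ = 4 * ℓ ^ 4 * H * L := by ring
    _ ≤ 4 * ((1 + 4 / ε) ^ 4 * (2 * N) ^ ε) * H * L := by gcongr
    _ = _ := by rw [mul_rpow (by norm_num) (by linarith)]; ring
end

section
/- Let κ > 0 and let 1 < z < y be real numbers. Let n be a squarefree positive integer having no prime factor ≤ z, and suppose that κ · Σ_{q prime, z < q ≤ y, q | n} (1 − log q / log y) < 1. Then Ω(n) < 1/κ + log n / log y. In particular, if n ≤ N and y = N^{ρ} with ρ > 0, then Ω(n) < 1/κ + 1/ρ. -/
/-!
For squarefree `n` write `Ω(n) = ∑_{q ∣ n} 1` and `log n / log y = ∑_{q ∣ n} log q / log y`.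
Then `Ω(n) - log n / log y = ∑_{q ∣ n} (1 - log q / log y)`. Every prime factor of `n` exceeds `z`,
so the terms with `q > y` are `≤ 0`, and what remains is the sum over `z < q ≤ y`, which is
`< 1/κ` by hypothesis. For `n ≤ N` and `y = N^ρ` one has `log n / log y ≤ 1/ρ`.
-/

open Real Finset

theorem Finset.card_le_sum_filter_one_sub_add_sum {ι : Type*} (s : Finset ι) (P : ι → Prop)
    [DecidablePred P] (f : ι → ℝ) (hf : ∀ i ∈ s, ¬P i → 1 ≤ f i) :
    (#s : ℝ) ≤ ∑ i ∈ s.filter P, (1 - f i) + ∑ i ∈ s, f i := by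
  have hlarge : ∑ i ∈ s.filter (¬P ·), (1 - f i) ≤ 0 :=
    sum_nonpos fun i hi ↦ by
      rw [mem_filter] at hi
      linarith [hf i hi.1 hi.2]
  have hsplit := sum_filter_add_sum_filter_not s P (fun i ↦ 1 - f i)
  have htotal : ∑ i ∈ s, (1 - f i) = #s - ∑ i ∈ s, f i := by
    rw [sum_sub_distrib, sum_const, nsmul_one]
  linarith

theorem Squarefree.cardFactors_eq_card_primeFactors {n : ℕ} (hn : Squarefree n) :
    ArithmeticFunction.cardFactors n = #n.primeFactors := by
  rw [← (ArithmeticFunction.cardDistinctFactors_eq_cardFactors_iff_squarefree hn.ne_zero).mpr hn,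
    ArithmeticFunction.cardDistinctFactors_apply, Nat.primeFactors, List.card_toFinset]

theorem Squarefree.log_eq_sum_log_primeFactors {n : ℕ} (hn : Squarefree n) :
    log n = ∑ p ∈ n.primeFactors, log p := by
  conv_lhs => rw [← Nat.prod_primeFactors_of_squarefree hn]
  push_cast
  exact log_prod fun p hp ↦ Nat.cast_ne_zero.mpr (Nat.prime_of_mem_primeFactors hp).ne_zero

theorem Real.log_div_log_rpow_le_one_div {x N ρ : ℝ} (hx : 1 ≤ x) (hxN : x ≤ N) (hρ : 0 ≤ ρ) :
    log x / log (N ^ ρ) ≤ 1 / ρ := by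
  have hlog : log x ≤ log N := log_le_log (by linarith) hxN
  rw [log_rpow (by linarith), mul_comm, ← div_div]
  exact div_le_div_of_nonneg_right (div_le_one_of_le₀ hlog ((log_nonneg hx).trans hlog)) hρ

theorem stmt_12_general (κ z y : ℝ) (hκ : 0 < κ) (hz : 1 < z) (hzy : z < y)
    (n : ℕ) (hsq : Squarefree n)
    (hnoz : ∀ p : ℕ, p.Prime → p ∣ n → z < (p : ℝ))
    (hsum : κ * ∑ q ∈ n.primeFactors.filter (fun q : ℕ => z < (q : ℝ) ∧ (q : ℝ) ≤ y),
        (1 - Real.log q / Real.log y) < 1) :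
    ((ArithmeticFunction.cardFactors n : ℕ) : ℝ) < 1 / κ + Real.log n / Real.log y ∧
    ∀ N ρ : ℝ, 0 < ρ → (n : ℝ) ≤ N → y = N ^ ρ →
      ((ArithmeticFunction.cardFactors n : ℕ) : ℝ) < 1 / κ + 1 / ρ := by
  have hlogy : 0 < log y := log_pos (hz.trans hzy)
  have hlarge : ∀ q ∈ n.primeFactors, ¬(z < (q : ℝ) ∧ (q : ℝ) ≤ y) → 1 ≤ log q / log y := by
    intro q hq hnot
    have hyq : y < q := lt_of_not_ge fun hqy ↦
      hnot ⟨hnoz q (Nat.prime_of_mem_primeFactors hq) (Nat.dvd_of_mem_primeFactors hq), hqy⟩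
    rw [one_le_div hlogy]
    exact log_le_log (by linarith) hyq.le
  have hsmall := (lt_div_iff₀' hκ).mpr hsum
  have hmain : (ArithmeticFunction.cardFactors n : ℝ) < 1 / κ + log n / log y := by
    rw [hsq.cardFactors_eq_card_primeFactors, hsq.log_eq_sum_log_primeFactors, sum_div]
    linarith [card_le_sum_filter_one_sub_add_sum _ _ _ hlarge]
  refine ⟨hmain, fun N ρ hρ hnN hyN ↦ ?_⟩
  have hn : (1 : ℝ) ≤ n := Nat.one_le_cast.mpr (Nat.pos_of_ne_zero hsq.ne_zero)
  have htail := log_div_log_rpow_le_one_div hn hnN hρ.le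
  rw [← hyN] at htail
  linarith

/-- Property of the sieve weights (cf. Halberstam–Richert, ch. 9).  Let `κ > 0` and
`1 < z < y`.  Let `n` be a squarefree positive integer with no prime factor `≤ z`, and
suppose `κ ∑_{q prime, z < q ≤ y, q ∣ n} (1 − log q / log y) < 1`.  Then
`Ω(n) < 1/κ + log n / log y`; in particular, if `n ≤ N` and `y = N^ρ` with `ρ > 0`,
then `Ω(n) < 1/κ + 1/ρ`. -/
theorem stmt_12 (κ z y : ℝ) (hκ : 0 < κ) (hz : 1 < z) (hzy : z < y)
    (n : ℕ) (hn : 0 < n) (hsq : Squarefree n)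
    (hnoz : ∀ p : ℕ, p.Prime → p ∣ n → z < (p : ℝ))
    (hsum : κ * ∑ q ∈ n.primeFactors.filter (fun q : ℕ => z < (q : ℝ) ∧ (q : ℝ) ≤ y),
        (1 - Real.log q / Real.log y) < 1) :
    ((ArithmeticFunction.cardFactors n : ℕ) : ℝ) < 1 / κ + Real.log n / Real.log y ∧
    ∀ N ρ : ℝ, 0 < ρ → (n : ℝ) ≤ N → y = N ^ ρ →
      ((ArithmeticFunction.cardFactors n : ℕ) : ℝ) < 1 / κ + 1 / ρ :=
  stmt_12_general κ z y hκ hz hzy n hsq hnoz hsum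
end
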